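/- Fix an integer B ≥ 1. Let θ ∈ ℝ^B be a fixed unit vector (‖θ‖₂ = 1), let μ ≥ 0 and a > 0 with a² > B, let z be a standard Gaussian random vector in ℝ^B (coordinates i.i.d. N(0,1)), and set y = μθ + z. Then P(‖y‖₂ > μ + a) ≤ 2 e^{−a²/2} + e^{−(1/2 − B/(2a²)) a²} (B/a²)^{−B/2}. -/

import Mathlib

/-!
By the triangle inequality `‖μθ + z‖₂ ≤ μ + ‖z‖₂`, the event is contained in `{a² ≤ ‖z‖₂²}`,
a chi-square tail. The Chernoff bound with parameter `l < 1/2` controls it by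
`e^{-l a²} E[e^{l ‖z‖₂²}] = e^{-l a²} (1 - 2l)^{-B/2}`, and the choice `l = 1/2 - B/(2a²)`
gives the second term; the first term is slack.
-/

open MeasureTheory ProbabilityTheory Real Set

lemma gaussianPDFReal_zero_one_mul_exp_mul_sq (l x : ℝ) :
    gaussianPDFReal 0 1 x * exp (l * x ^ 2) = (√(2 * π))⁻¹ * exp (-(1 / 2 - l) * x ^ 2) := by
  simp only [gaussianPDFReal, NNReal.coe_one, mul_one, sub_zero, mul_assoc, ← exp_add]
  ring_nf

lemma integrable_exp_mul_sq_gaussianReal {l : ℝ} (hl : l < 1 / 2) :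
    Integrable (fun x ↦ exp (l * x ^ 2)) (gaussianReal 0 1) := by
  rw [gaussianReal_of_var_ne_zero 0 one_ne_zero,
    integrable_withDensity_iff_integrable_smul' (measurable_gaussianPDF 0 1)
      (.of_forall fun _ ↦ gaussianPDF_lt_top)]
  simp_rw [toReal_gaussianPDF, smul_eq_mul, gaussianPDFReal_zero_one_mul_exp_mul_sq]
  exact (integrable_exp_neg_mul_sq (by linarith)).const_mul _

lemma integral_exp_mul_sq_gaussianReal {l : ℝ} (hl : l < 1 / 2) :
    ∫ x, exp (l * x ^ 2) ∂(gaussianReal 0 1) = (1 - 2 * l) ^ (-(1 / 2 : ℝ)) := by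
  simp_rw [integral_gaussianReal_eq_integral_smul one_ne_zero, smul_eq_mul,
    gaussianPDFReal_zero_one_mul_exp_mul_sq, integral_const_mul, integral_gaussian,
    rpow_neg (by linarith : (0 : ℝ) ≤ 1 - 2 * l), ← sqrt_eq_rpow, ← sqrt_inv]
  rw [← sqrt_mul (by positivity)]
  congr 1
  field_simp

section Pi

variable {ι : Type*} [Fintype ι]

lemma integrable_exp_mul_sum_sq_pi_gaussianReal {l : ℝ} (hl : l < 1 / 2) :
    Integrable (fun z : ι → ℝ ↦ exp (l * ∑ i, z i ^ 2))
      (Measure.pi fun _ ↦ gaussianReal 0 1) := by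
  simp_rw [Finset.mul_sum, exp_sum]
  exact .fintype_prod fun _ ↦ integrable_exp_mul_sq_gaussianReal hl

lemma mgf_sum_sq_pi_gaussianReal {l : ℝ} (hl : l < 1 / 2) :
    mgf (fun z : ι → ℝ ↦ ∑ i, z i ^ 2) (Measure.pi fun _ ↦ gaussianReal 0 1) l
      = (1 - 2 * l) ^ (-(Fintype.card ι : ℝ) / 2) := by
  simp_rw [mgf, Finset.mul_sum, exp_sum]
  rw [integral_fintype_prod_eq_pow (fun x ↦ exp (l * x ^ 2)),
    integral_exp_mul_sq_gaussianReal hl, ← rpow_natCast, ← rpow_mul (by linarith)]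
  ring_nf

lemma measureReal_sum_sq_ge_le_pi_gaussianReal (r : ℝ) {l : ℝ} (hl₀ : 0 ≤ l)
    (hl : l < 1 / 2) :
    (Measure.pi fun _ : ι ↦ gaussianReal 0 1).real {z | r ≤ ∑ i, z i ^ 2}
      ≤ exp (-l * r) * (1 - 2 * l) ^ (-(Fintype.card ι : ℝ) / 2) := by
  rw [← mgf_sum_sq_pi_gaussianReal hl]
  exact measure_ge_le_exp_mul_mgf r hl₀ (integrable_exp_mul_sum_sq_pi_gaussianReal hl)

lemma sqrt_sum_sq_mul_add_le (c : ℝ) (θ z : ι → ℝ) :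
    √(∑ i, (c * θ i + z i) ^ 2) ≤ |c| * √(∑ i, θ i ^ 2) + √(∑ i, z i ^ 2) := by
  have h_norm : ∀ x : ι → ℝ, √(∑ i, x i ^ 2) = ‖WithLp.toLp 2 x‖ := fun x ↦ by
    simp [EuclideanSpace.norm_eq]
  have h_add : WithLp.toLp 2 (fun i ↦ c * θ i + z i) = c • WithLp.toLp 2 θ + WithLp.toLp 2 z :=
    rfl
  rw [h_norm, h_norm, h_norm, h_add, ← Real.norm_eq_abs, ← norm_smul]
  exact norm_add_le _ _

end Pi

theorem stmt13 (B : ℕ) (hB : 1 ≤ B) (θ : Fin B → ℝ) (hθ : Real.sqrt (∑ i, θ i ^ 2) = 1)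
    (μ : ℝ) (hμ : 0 ≤ μ) (a : ℝ) (ha : 0 < a) (ha2 : (B : ℝ) < a ^ 2) :
    (Measure.pi fun _ : Fin B => gaussianReal 0 1)
        {z : Fin B → ℝ | μ + a < Real.sqrt (∑ i, (μ * θ i + z i) ^ 2)}
      ≤ ENNReal.ofReal
          (2 * Real.exp (-a ^ 2 / 2) +
            Real.exp (-(1 / 2 - (B : ℝ) / (2 * a ^ 2)) * a ^ 2) *
              ((B : ℝ) / a ^ 2) ^ (-(B : ℝ) / 2)) := by
  have hsub : {z : Fin B → ℝ | μ + a < √(∑ i, (μ * θ i + z i) ^ 2)}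
      ⊆ {z | a ^ 2 ≤ ∑ i, z i ^ 2} := fun z hz ↦ by
    have h_tri := sqrt_sum_sq_mul_add_le μ θ z
    rw [hθ, abs_of_nonneg hμ, mul_one] at h_tri
    exact ((lt_sqrt ha.le).1 (by linarith [hz.trans_le h_tri])).le
  have hB₀ : (0 : ℝ) < B := by exact_mod_cast hB
  have hl₀ : 0 ≤ 1 / 2 - (B : ℝ) / (2 * a ^ 2) := by
    rw [sub_nonneg, div_le_iff₀ (by positivity)]
    linarith
  have hl : 1 / 2 - (B : ℝ) / (2 * a ^ 2) < 1 / 2 := sub_lt_self _ (by positivity)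
  have hchernoff := measureReal_sum_sq_ge_le_pi_gaussianReal (ι := Fin B) (a ^ 2) hl₀ hl
  rw [Fintype.card_fin, show 1 - 2 * (1 / 2 - (B : ℝ) / (2 * a ^ 2)) = B / a ^ 2 by
    field_simp; ring] at hchernoff
  rw [← ofReal_measureReal]
  gcongr
  calc _ ≤ _ := measureReal_mono hsub
    _ ≤ _ := hchernoff
    _ ≤ _ := le_add_of_nonneg_left (by positivity)
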